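/- arXiv:2108.04585 — 3 statements merged into one kernel-verified Lean document; each statement's English description precedes it below -/
import Mathlib

section
/- Consider the scalar update ξ(k+1) = z(k)·ξ(k) + (1−z(k))·r(k) with z(k) ∈ (0, σ_max], σ_max < 1, and |r(k)| ≤ 1 for all k. If |ξ(0)| > 1, then for all k, |ξ(k)| − 1 ≤ σ_max^k (|ξ(0)| − 1); in particular |ξ(k)| converges to the interval [−1,1] exponentially fast, and there exists a finite k̄ with |ξ(k)| ≤ 1 + ε for any ε > 0 and all k ≥ k̄. -/
/-! Since `ξ (k + 1)` is a convex combination of `ξ k` and a point of `[-1, 1]`, the excess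
`|ξ k| - 1` is multiplied by at most `z k ≤ σmax` at each step, hence decays geometrically. -/

open Filter Topology

theorem abs_convex_comb_sub_one_le {x r z : ℝ} (hz₀ : 0 ≤ z) (hz₁ : z ≤ 1) (hr : |r| ≤ 1) :
    |z * x + (1 - z) * r| - 1 ≤ z * (|x| - 1) := by
  have hz₁' : 0 ≤ 1 - z := sub_nonneg.mpr hz₁
  calc |z * x + (1 - z) * r| - 1 ≤ z * |x| + (1 - z) * |r| - 1 := by
        gcongr
        calc |z * x + (1 - z) * r| ≤ |z * x| + |(1 - z) * r| := abs_add_le _ _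
          _ = z * |x| + (1 - z) * |r| := by
            rw [abs_mul, abs_mul, abs_of_nonneg hz₀, abs_of_nonneg hz₁']
    _ ≤ z * |x| + (1 - z) * 1 - 1 := by gcongr
    _ = z * (|x| - 1) := by ring

theorem le_pow_mul_of_le_mul_of_le {α : Type*} [CommRing α] [LinearOrder α] [IsStrictOrderedRing α]
    {e z : ℕ → α} {σ : α} (hσ : 0 ≤ σ) (hz : ∀ k, 0 ≤ z k ∧ z k ≤ σ)
    (he : ∀ k, e (k + 1) ≤ z k * e k) (he₀ : 0 ≤ e 0) (k : ℕ) : e k ≤ σ ^ k * e 0 := by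
  induction k with
  | zero => simp
  | succ k ih =>
    calc e (k + 1) ≤ z k * e k := he k
      _ ≤ z k * (σ ^ k * e 0) := mul_le_mul_of_nonneg_left ih (hz k).1
      _ ≤ σ * (σ ^ k * e 0) := by gcongr; exact (hz k).2
      _ = σ ^ (k + 1) * e 0 := by ring

theorem stmt_3 (ξ z r : ℕ → ℝ) (σmax : ℝ) (hσmax : σmax < 1)
    (hz : ∀ k, 0 < z k ∧ z k ≤ σmax)
    (hr : ∀ k, |r k| ≤ 1)
    (hrec : ∀ k, ξ (k + 1) = z k * ξ k + (1 - z k) * r k)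
    (h0 : 1 < |ξ 0|) :
    (∀ k, |ξ k| - 1 ≤ σmax ^ k * (|ξ 0| - 1)) ∧
    (∀ ε > (0:ℝ), ∃ kbar : ℕ, ∀ k ≥ kbar, |ξ k| ≤ 1 + ε) := by
  have hσ : 0 ≤ σmax := (hz 0).1.le.trans (hz 0).2
  have decay : ∀ k, |ξ k| - 1 ≤ σmax ^ k * (|ξ 0| - 1) :=
    le_pow_mul_of_le_mul_of_le (e := fun k ↦ |ξ k| - 1) hσ (fun k ↦ ⟨(hz k).1.le, (hz k).2⟩)
      (fun k ↦ hrec k ▸ abs_convex_comb_sub_one_le (hz k).1.le ((hz k).2.trans hσmax.le) (hr k))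
      (sub_nonneg.mpr h0.le)
  refine ⟨decay, fun ε hε ↦ ?_⟩
  have hlim : Tendsto (fun k ↦ σmax ^ k * (|ξ 0| - 1)) atTop (𝓝 0) := by
    simpa using (tendsto_pow_atTop_nhds_zero_of_lt_one hσ hσmax).mul_const (|ξ 0| - 1)
  obtain ⟨kbar, hkbar⟩ := eventually_atTop.mp (hlim.eventually (ge_mem_nhds hε))
  exact ⟨kbar, fun k hk ↦ by linarith [decay k, hkbar k hk]⟩
end

section
/- Suppose a scalar sequence satisfies ξ(k+1) = z(k) ξ(k) + (1−z(k)) r(k) with z(k) ∈ [z_min, z_max] ⊂ (0,1) and |r(k)| ≤ r̄ < 1 for all k. Then lim sup_{k→∞} |ξ(k)| ≤ r̄, for any initial condition ξ(0) ∈ ℝ. -/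
/-! Measure the excess `e k = |ξ k| - r̄`. Since `ξ (k + 1)` is a convex combination of `ξ k`
and a point of `[-r̄, r̄]`, the excess contracts by the weight `z k ≤ z_max < 1`, so the positive
part of the excess decays like `z_max ^ k` and `|ξ k|` is eventually below `r̄ + ε`. -/

open Filter

lemma abs_convexComb_sub_le {z x r R : ℝ} (hz₀ : 0 ≤ z) (hz₁ : z ≤ 1) (hr : |r| ≤ R) :
    |z * x + (1 - z) * r| - R ≤ z * (|x| - R) := by
  have hz' : 0 ≤ 1 - z := by linarith
  calc |z * x + (1 - z) * r| - R ≤ |z * x| + |(1 - z) * r| - R := by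
        gcongr; exact abs_add_le _ _
    _ = z * |x| + (1 - z) * |r| - R := by
        rw [abs_mul, abs_mul, abs_of_nonneg hz₀, abs_of_nonneg hz']
    _ ≤ z * |x| + (1 - z) * R - R := by gcongr
    _ = z * (|x| - R) := by ring

lemma abs_sub_le_pow_mul_of_convexComb {ξ z r : ℕ → ℝ} {c R : ℝ}
    (hz₀ : ∀ k, 0 ≤ z k) (hzc : ∀ k, z k ≤ c) (hc : c ≤ 1) (hr : ∀ k, |r k| ≤ R)
    (hrec : ∀ k, ξ (k + 1) = z k * ξ k + (1 - z k) * r k) (k : ℕ) :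
    |ξ k| - R ≤ c ^ k * max (|ξ 0| - R) 0 := by
  induction k with
  | zero => simp
  | succ k ih =>
    have hpow : 0 ≤ c ^ k * max (|ξ 0| - R) 0 :=
      mul_nonneg (pow_nonneg ((hz₀ 0).trans (hzc 0)) k) (le_max_right _ _)
    calc |ξ (k + 1)| - R ≤ z k * (|ξ k| - R) := by
          rw [hrec k]; exact abs_convexComb_sub_le (hz₀ k) ((hzc k).trans hc) (hr k)
      _ ≤ z k * (c ^ k * max (|ξ 0| - R) 0) := mul_le_mul_of_nonneg_left ih (hz₀ k)
      _ ≤ c * (c ^ k * max (|ξ 0| - R) 0) := mul_le_mul_of_nonneg_right (hzc k) hpow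
      _ = c ^ (k + 1) * max (|ξ 0| - R) 0 := by ring

lemma limsup_le_of_le_of_tendsto {u v : ℕ → ℝ} {L : ℝ} (hu : ∀ k, 0 ≤ u k) (huv : ∀ k, u k ≤ v k)
    (hv : Tendsto v atTop (nhds L)) : limsup u atTop ≤ L :=
  hv.limsup_eq ▸ limsup_le_limsup (Eventually.of_forall huv)
    (isCoboundedUnder_le_of_le atTop hu) hv.isBoundedUnder_le

theorem stmt_17_general (ξ z r : ℕ → ℝ) (zmin zmax rbar : ℝ)
    (hzmin : 0 < zmin) (hzmax : zmax < 1)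
    (hz : ∀ k, z k ∈ Set.Icc zmin zmax)
    (hr : ∀ k, |r k| ≤ rbar)
    (hrec : ∀ k, ξ (k + 1) = z k * ξ k + (1 - z k) * r k) :
    Filter.limsup (fun k => |ξ k|) Filter.atTop ≤ rbar := by
  have hz₀ : ∀ k, 0 ≤ z k := fun k => hzmin.le.trans (hz k).1
  have hzmax₀ : 0 ≤ zmax := (hz₀ 0).trans (hz 0).2
  have hbound := abs_sub_le_pow_mul_of_convexComb hz₀ (fun k => (hz k).2) hzmax.le hr hrec
  have hdecay : Tendsto (fun k => rbar + zmax ^ k * max (|ξ 0| - rbar) 0) atTop (nhds rbar) := by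
    simpa using ((tendsto_pow_atTop_nhds_zero_of_lt_one hzmax₀ hzmax).mul_const _).const_add rbar
  exact limsup_le_of_le_of_tendsto (fun k => abs_nonneg _)
    (fun k => by linarith [hbound k]) hdecay

theorem stmt_17 (ξ z r : ℕ → ℝ) (zmin zmax rbar : ℝ)
    (hzmin : 0 < zmin) (hzle : zmin ≤ zmax) (hzmax : zmax < 1)
    (hz : ∀ k, z k ∈ Set.Icc zmin zmax)
    (hr : ∀ k, |r k| ≤ rbar) (hrbar : rbar < 1)
    (hrec : ∀ k, ξ (k + 1) = z k * ξ k + (1 - z k) * r k) :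
    Filter.limsup (fun k => |ξ k|) Filter.atTop ≤ rbar :=
  stmt_17_general ξ z r zmin zmax rbar hzmin hzmax hz hr hrec
end

section
/- Single-unit (n = m = 1) δISS condition: consider the scalar GRU ξ⁺ = z ξ + (1−z) φ(w_r v + u_r f ξ + b_r), z = σ(w_z v + u_z ξ + b_z), f = σ(w_f v + u_f ξ + b_f), with v, and (after transient) ξ, in [−1,1]. If |u_r|(|u_f|/4 + σ̄_f) + (1/4)·((1+φ̄_r)/(1−σ̄_z))·|u_z| < 1, where σ̄_z = σ(|w_z|+|u_z|+|b_z|), σ̄_f = σ(|w_f|+|u_f|+|b_f|), φ̄_r = tanh(|w_r|+|u_r|+|b_r|), then the one-step map is a contraction in ξ uniformly in v ∈ [−1,1]: there exists ρ < 1 with |F(ξ_a,v) − F(ξ_b,v)| ≤ ρ|ξ_a − ξ_b| for all ξ_a, ξ_b ∈ [−1,1], v ∈ [−1,1]. -/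
/-!
Write the update as `F ξ = z ξ + (1 - z) h` with update gate `z` and candidate state `h`. For two
states, `F ξa - F ξb = za (ξa - ξb) + (za - zb) (ξb - hb) + (1 - za) (ha - hb)`. Since `σ` is
`1/4`-Lipschitz and `tanh` is `1`-Lipschitz, the last two terms are at most `|uz| / 4 (1 + φ̄r) Δ`
and `(1 - za) X Δ` with `X = |ur| (|uf| / 4 + σ̄f)`, so the gain is at most
`σ̄z + (1 - σ̄z) X + |uz| / 4 (1 + φ̄r)` (using `za ≤ σ̄z` and `X ≤ 1`). The weight condition is
this gain being `< 1`, divided through by `1 - σ̄z`.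
-/

noncomputable def sigmoid (x : ℝ) : ℝ := 1 / (1 + Real.exp (-x))

/-- Scalar GRU one-step map `F(ξ,v) = z ξ + (1−z) tanh(w_r v + u_r f ξ + b_r)`
with gates `z = σ(w_z v + u_z ξ + b_z)`, `f = σ(w_f v + u_f ξ + b_f)`. -/
noncomputable def gruF (wz uz bz wf uf bf wr ur br : ℝ) (ξ v : ℝ) : ℝ :=
  sigmoid (wz * v + uz * ξ + bz) * ξ +
    (1 - sigmoid (wz * v + uz * ξ + bz)) *
      Real.tanh (wr * v + ur * (sigmoid (wf * v + uf * ξ + bf)) * ξ + br)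

namespace Real

lemma sigmoid_mul_one_sub_le (x : ℝ) : sigmoid x * (1 - sigmoid x) ≤ 4⁻¹ := by
  nlinarith [sq_nonneg (sigmoid x - 2⁻¹)]

lemma lipschitzWith_sigmoid : LipschitzWith 4⁻¹ sigmoid :=
  lipschitzWith_of_nnnorm_deriv_le differentiable_sigmoid fun x => by
    rw [← NNReal.coe_le_coe, coe_nnnorm, deriv_sigmoid, norm_of_nonneg
      (mul_nonneg (sigmoid_nonneg x) (sub_nonneg.2 (sigmoid_le_one x)))]
    exact_mod_cast sigmoid_mul_one_sub_le x

lemma abs_sigmoid_sub_le (a b : ℝ) : |sigmoid a - sigmoid b| ≤ |a - b| / 4 := by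
  simpa [dist_eq, div_eq_inv_mul] using lipschitzWith_sigmoid.dist_le_mul a b

lemma tanh_eq_two_mul_sigmoid_sub_one (x : ℝ) : tanh x = 2 * sigmoid (2 * x) - 1 := by
  have h : exp (-(2 * x)) = exp (-x) ^ 2 := by rw [← exp_nat_mul]; ring_nf
  rw [tanh_eq, sigmoid_def, h, exp_neg]
  field_simp
  ring

lemma tanh_monotone : Monotone tanh := fun a b hab => by
  simp only [tanh_eq_two_mul_sigmoid_sub_one]
  linarith [sigmoid_le (by linarith : 2 * a ≤ 2 * b)]

lemma tanh_nonneg {x : ℝ} (hx : 0 ≤ x) : 0 ≤ tanh x := by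
  simpa using tanh_monotone hx

lemma abs_tanh_le_tanh_of_abs_le {x B : ℝ} (h : |x| ≤ B) : |tanh x| ≤ tanh B := by
  rw [abs_le] at h ⊢
  have := tanh_monotone h.1
  rw [tanh_neg] at this
  exact ⟨this, tanh_monotone h.2⟩

lemma abs_tanh_sub_le (a b : ℝ) : |tanh a - tanh b| ≤ |a - b| := by
  have h := abs_sigmoid_sub_le (2 * a) (2 * b)
  rw [← mul_sub, abs_mul, abs_two] at h
  rw [tanh_eq_two_mul_sigmoid_sub_one, tanh_eq_two_mul_sigmoid_sub_one,
    show ∀ p q : ℝ, 2 * p - 1 - (2 * q - 1) = 2 * (p - q) by intros; ring, abs_mul, abs_two]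
  linarith

end Real

lemma sigmoid_eq_real_sigmoid : sigmoid = Real.sigmoid := by
  funext x; rw [sigmoid, one_div, Real.sigmoid_def]

lemma abs_affine_le_of_abs_le_one (w u b : ℝ) {x y : ℝ} (hx : |x| ≤ 1) (hy : |y| ≤ 1) :
    |w * x + u * y + b| ≤ |w| + |u| + |b| := by
  calc |w * x + u * y + b| ≤ |w| * |x| + |u| * |y| + |b| := by
        rw [← abs_mul, ← abs_mul]; exact (abs_add_le _ _).trans (by gcongr; exact abs_add_le _ _)
    _ ≤ |w| + |u| + |b| := by
        linarith [mul_le_of_le_one_right (abs_nonneg w) hx, mul_le_of_le_one_right (abs_nonneg u) hy]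

lemma sigmoid_affine_le (w u b : ℝ) {x y : ℝ} (hx : |x| ≤ 1) (hy : |y| ≤ 1) :
    Real.sigmoid (w * x + u * y + b) ≤ Real.sigmoid (|w| + |u| + |b|) :=
  Real.sigmoid_le ((le_abs_self _).trans (abs_affine_le_of_abs_le_one w u b hx hy))

lemma abs_sigmoid_affine_sub_le (w u b v x y : ℝ) :
    |Real.sigmoid (w * v + u * x + b) - Real.sigmoid (w * v + u * y + b)| ≤ |u| / 4 * |x - y| := by
  have h := Real.abs_sigmoid_sub_le (w * v + u * x + b) (w * v + u * y + b)
  rwa [show w * v + u * x + b - (w * v + u * y + b) = u * (x - y) by ring, abs_mul,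
    mul_div_right_comm] at h

lemma abs_mul_sub_mul_le {fa fb x y F L : ℝ} (hfa : |fa| ≤ F) (hf : |fa - fb| ≤ L * |x - y|)
    (hy : |y| ≤ 1) : |fa * x - fb * y| ≤ (L + F) * |x - y| :=
  calc |fa * x - fb * y| = |fa * (x - y) + (fa - fb) * y| := by ring_nf
    _ ≤ |fa| * |x - y| + |fa - fb| * |y| := by
        rw [← abs_mul, ← abs_mul]; exact abs_add_le _ _
    _ ≤ F * |x - y| + L * |x - y| * 1 :=
        add_le_add (by gcongr) (mul_le_mul hf hy (abs_nonneg _) ((abs_nonneg _).trans hf))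
    _ = (L + F) * |x - y| := by ring

lemma abs_mix_sub_mix_le {za zb x y hx hy : ℝ} (h0 : 0 ≤ za) (h1 : za ≤ 1) :
    |(za * x + (1 - za) * hx) - (zb * y + (1 - zb) * hy)| ≤
      za * |x - y| + |za - zb| * |y - hy| + (1 - za) * |hx - hy| := by
  calc |(za * x + (1 - za) * hx) - (zb * y + (1 - zb) * hy)|
        = |za * (x - y) + (za - zb) * (y - hy) + (1 - za) * (hx - hy)| := by ring_nf
    _ ≤ |za * (x - y)| + |(za - zb) * (y - hy)| + |(1 - za) * (hx - hy)| := abs_add_three _ _ _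
    _ = za * |x - y| + |za - zb| * |y - hy| + (1 - za) * |hx - hy| := by
        rw [abs_mul, abs_mul, abs_mul, abs_of_nonneg h0, abs_of_nonneg (sub_nonneg.2 h1)]

lemma add_one_sub_mul_add_lt_one {s X c : ℝ} (hs : s < 1) (h : X + c / (1 - s) < 1) :
    s + (1 - s) * X + c < 1 := by
  have hc : c < (1 - X) * (1 - s) := (div_lt_iff₀ (sub_pos.2 hs)).1 (by linarith)
  nlinarith

section GRU

variable (wz uz bz wf uf bf wr ur br : ℝ)

noncomputable def gruRate : ℝ :=
  Real.sigmoid (|wz| + |uz| + |bz|) +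
    (1 - Real.sigmoid (|wz| + |uz| + |bz|)) *
      (|ur| * (|uf| / 4 + Real.sigmoid (|wf| + |uf| + |bf|))) +
    |uz| / 4 * (1 + Real.tanh (|wr| + |ur| + |br|))

lemma gruRate_nonneg : 0 ≤ gruRate wz uz bz wf uf bf wr ur br := by
  have hσz := Real.sigmoid_nonneg (|wz| + |uz| + |bz|)
  have hσz' := sub_nonneg.2 (Real.sigmoid_le_one (|wz| + |uz| + |bz|))
  have hσf := Real.sigmoid_nonneg (|wf| + |uf| + |bf|)
  have hφr := Real.tanh_nonneg (by positivity : 0 ≤ |wr| + |ur| + |br|)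
  unfold gruRate
  positivity

lemma abs_gruF_sub_le (hX : |ur| * (|uf| / 4 + Real.sigmoid (|wf| + |uf| + |bf|)) ≤ 1)
    {ξa ξb v : ℝ} (ha : |ξa| ≤ 1) (hb : |ξb| ≤ 1) (hv : |v| ≤ 1) :
    |gruF wz uz bz wf uf bf wr ur br ξa v - gruF wz uz bz wf uf bf wr ur br ξb v| ≤
      gruRate wz uz bz wf uf bf wr ur br * |ξa - ξb| := by
  simp only [gruF, gruRate, sigmoid_eq_real_sigmoid]
  set za := Real.sigmoid (wz * v + uz * ξa + bz)
  set zb := Real.sigmoid (wz * v + uz * ξb + bz)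
  set fa := Real.sigmoid (wf * v + uf * ξa + bf)
  set fb := Real.sigmoid (wf * v + uf * ξb + bf)
  set σz := Real.sigmoid (|wz| + |uz| + |bz|)
  set X := |ur| * (|uf| / 4 + Real.sigmoid (|wf| + |uf| + |bf|))
  set φr := Real.tanh (|wr| + |ur| + |br|)
  have hza : za ≤ σz := sigmoid_affine_le wz uz bz hv ha
  have hz : |za - zb| ≤ |uz| / 4 * |ξa - ξb| := abs_sigmoid_affine_sub_le wz uz bz v ξa ξb
  have hcand : |Real.tanh (wr * v + ur * fa * ξa + br) - Real.tanh (wr * v + ur * fb * ξb + br)|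
      ≤ X * |ξa - ξb| := by
    refine (Real.abs_tanh_sub_le _ _).trans ?_
    rw [show wr * v + ur * fa * ξa + br - (wr * v + ur * fb * ξb + br)
      = ur * (fa * ξa - fb * ξb) by ring, abs_mul, mul_assoc]
    gcongr
    refine abs_mul_sub_mul_le ?_ (abs_sigmoid_affine_sub_le wf uf bf v ξa ξb) hb
    rw [abs_of_pos (Real.sigmoid_pos _)]
    exact sigmoid_affine_le wf uf bf hv ha
  have hstate : |ξb - Real.tanh (wr * v + ur * fb * ξb + br)| ≤ 1 + φr := by
    have hfξ : |fb * ξb| ≤ 1 := by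
      rw [abs_mul, abs_of_pos (Real.sigmoid_pos _)]
      exact mul_le_one₀ (Real.sigmoid_le_one _) (abs_nonneg _) hb
    refine (abs_sub _ _).trans (add_le_add hb (Real.abs_tanh_le_tanh_of_abs_le ?_))
    simpa only [mul_assoc] using abs_affine_le_of_abs_le_one wr ur br hv hfξ
  calc _ ≤ za * |ξa - ξb| + |za - zb| * |ξb - Real.tanh (wr * v + ur * fb * ξb + br)| +
        (1 - za) * |Real.tanh (wr * v + ur * fa * ξa + br) -
          Real.tanh (wr * v + ur * fb * ξb + br)| :=
        abs_mix_sub_mix_le (Real.sigmoid_nonneg _) (Real.sigmoid_le_one _)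
    _ ≤ za * |ξa - ξb| + |uz| / 4 * |ξa - ξb| * (1 + φr) + (1 - za) * (X * |ξa - ξb|) := by
        gcongr
        exact sub_nonneg.2 (Real.sigmoid_le_one _)
    _ ≤ (σz + (1 - σz) * X + |uz| / 4 * (1 + φr)) * |ξa - ξb| := by
        nlinarith [mul_nonneg (mul_nonneg (sub_nonneg.2 hza) (sub_nonneg.2 hX)) (abs_nonneg (ξa - ξb))]

end GRU

/-- Scalar instance of the δISS sufficient condition: the weight inequality
implies the one-step map is a contraction in `ξ`, uniformly in `v ∈ [−1,1]`. -/
theorem stmt_19 (wz uz bz wf uf bf wr ur br : ℝ)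
    (hcond : |ur| * (|uf| / 4 + sigmoid (|wf| + |uf| + |bf|)) +
      (1 / 4) * ((1 + Real.tanh (|wr| + |ur| + |br|)) /
        (1 - sigmoid (|wz| + |uz| + |bz|))) * |uz| < 1) :
    ∃ ρ : ℝ, 0 ≤ ρ ∧ ρ < 1 ∧
      ∀ ξa ξb v : ℝ, ξa ∈ Set.Icc (-1:ℝ) 1 → ξb ∈ Set.Icc (-1:ℝ) 1 →
        v ∈ Set.Icc (-1:ℝ) 1 →
        |gruF wz uz bz wf uf bf wr ur br ξa v -
          gruF wz uz bz wf uf bf wr ur br ξb v| ≤ ρ * |ξa - ξb| := by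
  rw [sigmoid_eq_real_sigmoid] at hcond
  set σz := Real.sigmoid (|wz| + |uz| + |bz|)
  set X := |ur| * (|uf| / 4 + Real.sigmoid (|wf| + |uf| + |bf|))
  set c := |uz| / 4 * (1 + Real.tanh (|wr| + |ur| + |br|))
  have hσz : σz < 1 := Real.sigmoid_lt_one _
  have hc : 0 ≤ c := by
    have := Real.tanh_nonneg (by positivity : 0 ≤ |wr| + |ur| + |br|)
    positivity
  have hcond' : X + c / (1 - σz) < 1 := by convert hcond using 2; ring
  have hX : X ≤ 1 := by linarith [div_nonneg hc (sub_nonneg.2 hσz.le)]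
  exact ⟨gruRate wz uz bz wf uf bf wr ur br, gruRate_nonneg _ _ _ _ _ _ _ _ _,
    add_one_sub_mul_add_lt_one hσz hcond', fun ξa ξb v ha hb hv =>
      abs_gruF_sub_le _ _ _ _ _ _ _ _ _ hX (abs_le.2 ha) (abs_le.2 hb) (abs_le.2 hv)⟩
end
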